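/- arXiv:1502.04497 — 4 statements merged into one kernel-verified Lean document; each statement's English description precedes it below -/
import Mathlib

section
/- Let A and B be n×n complex positive definite matrices, t ∈ [0,1], and let 0 < p ≤ p'. Then for each j ∈ {1,…,n}, λ_j(((1-t)A^p + tB^p)^{1/p}) ≤ λ_j(((1-t)A^{p'} + tB^{p'})^{1/p'}). -/
open scoped BigOperators ComplexOrder

/-- `f` applied to a Hermitian matrix via the functional calculus:
if `A = U diag(λᵢ) U*` then `herFun f A = U diag(f λᵢ) U*`
(junk value `0` if the matrix is not Hermitian). -/
noncomputable def herFun {n : ℕ} (f : ℝ → ℝ) (A : Matrix (Fin n) (Fin n) ℂ) :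
    Matrix (Fin n) (Fin n) ℂ :=
  if hA : A.IsHermitian then
    (hA.eigenvectorUnitary : Matrix (Fin n) (Fin n) ℂ) *
      Matrix.diagonal (fun i => (f (hA.eigenvalues i) : ℂ)) *
      (star hA.eigenvectorUnitary : Matrix (Fin n) (Fin n) ℂ)
  else 0

/-- Real matrix power `A^r` of a Hermitian (e.g. positive definite) matrix,
via the functional calculus. -/
noncomputable def mpow {n : ℕ} (A : Matrix (Fin n) (Fin n) ℂ) (r : ℝ) :
    Matrix (Fin n) (Fin n) ℂ :=
  herFun (fun x => x ^ r) A

/-- Matrix logarithm of a Hermitian (e.g. positive definite) matrix,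
via the functional calculus. -/
noncomputable def mlog {n : ℕ} (A : Matrix (Fin n) (Fin n) ℂ) :
    Matrix (Fin n) (Fin n) ℂ :=
  herFun Real.log A

/-- Matrix exponential. -/
noncomputable def mexp {n : ℕ} (A : Matrix (Fin n) (Fin n) ℂ) :
    Matrix (Fin n) (Fin n) ℂ :=
  NormedSpace.exp A

/-- The `t`-geometric mean `A #_t B = A^{1/2} (A^{-1/2} B A^{-1/2})^t A^{1/2}`. -/
noncomputable def gm {n : ℕ} (A B : Matrix (Fin n) (Fin n) ℂ) (t : ℝ) :
    Matrix (Fin n) (Fin n) ℂ :=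
  mpow A (1/2) * mpow (mpow A (-(1/2)) * B * mpow A (-(1/2))) t * mpow A (1/2)

/-- `eigVal A j` is the `j`-th eigenvalue (`j = 0, …, n-1`) of the Hermitian matrix `A`,
ordered decreasingly: `eigVal A 0 ≥ eigVal A 1 ≥ ⋯ ≥ eigVal A (n-1)`
(junk value `0` if `A` is not Hermitian).  Thus `λ_j` of the paper is `eigVal A (j-1)`. -/
noncomputable def eigVal {n : ℕ} (A : Matrix (Fin n) (Fin n) ℂ) (j : Fin n) : ℝ :=
  if hA : A.IsHermitian then (hA.eigenvalues ∘ Tuple.sort hA.eigenvalues) j.rev else 0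

/-- `prodTopEig A k = ∏_{j=1}^k λ_j(A)`, the product of the `k` largest eigenvalues
of the Hermitian matrix `A`. -/
noncomputable def prodTopEig {n : ℕ} (A : Matrix (Fin n) (Fin n) ℂ) (k : ℕ) : ℝ :=
  ∏ j ∈ Finset.univ.filter (fun j : Fin n => (j : ℕ) < k), eigVal A j

/-- A unitarily invariant norm on `n × n` complex matrices: a norm `N`
with `N (U * X * V) = N X` for all unitaries `U, V`. -/
structure UnitarilyInvariantNorm (n : ℕ) where
  N : Matrix (Fin n) (Fin n) ℂ → ℝ
  add_le : ∀ X Y, N (X + Y) ≤ N X + N Y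
  smul_eq : ∀ (c : ℂ) (X), N (c • X) = ‖c‖ * N X
  eq_zero : ∀ X, N X = 0 → X = 0
  invariant : ∀ U V : Matrix.unitaryGroup (Fin n) ℂ, ∀ X,
    N ((U : Matrix (Fin n) (Fin n) ℂ) * X * (V : Matrix (Fin n) (Fin n) ℂ)) = N X

/-!
Write `C = (1-t)Aᵖ + tBᵖ` and `D = (1-t)A^{p'} + tB^{p'}`, so that the claim reads
`λ_j(C)^{p'/p} ≤ λ_j(D)`. A dimension count in the two eigenbases gives a vector `v` lying in
the span of the eigenvectors of `C` with eigenvalue `≥ λ_j(C)` and in that of the eigenvectors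
of `D` with eigenvalue `≤ λ_j(D)`, so that `λ_j(C) ≤ R_C(v)` and `R_D(v) ≤ λ_j(D)` for the
Rayleigh quotient `R`. In the eigenbasis of `A` the Rayleigh quotient `R_{Aᵖ}(v)` is a convex
combination of the `αᵢᵖ`, so Jensen's inequality for `x ↦ x^{p'/p}` gives
`R_{Aᵖ}(v)^{p'/p} ≤ R_{A^{p'}}(v)`; together with the convexity of `x ↦ x^{p'/p}` this yields
`R_C(v)^{p'/p} ≤ R_D(v)`.
-/

open Matrix Finset

lemma le_sum_mul_of_forall_ne_zero {ι : Type*} [Fintype ι] {w d : ι → ℝ} {a : ℝ}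
    (hw0 : ∀ i, 0 ≤ w i) (hw1 : ∑ i, w i = 1) (h : ∀ i, w i ≠ 0 → a ≤ d i) :
    a ≤ ∑ i, w i * d i := by
  rw [← one_mul a, ← hw1, sum_mul]
  refine sum_le_sum fun i _ => ?_
  by_cases hi : w i = 0
  · simp [hi]
  · exact mul_le_mul_of_nonneg_left (h i hi) (hw0 i)

lemma sum_mul_le_of_forall_ne_zero {ι : Type*} [Fintype ι] {w d : ι → ℝ} {a : ℝ}
    (hw0 : ∀ i, 0 ≤ w i) (hw1 : ∑ i, w i = 1) (h : ∀ i, w i ≠ 0 → d i ≤ a) :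
    ∑ i, w i * d i ≤ a := by
  rw [← one_mul a, ← hw1, sum_mul]
  refine sum_le_sum fun i _ => ?_
  by_cases hi : w i = 0
  · simp [hi]
  · exact mul_le_mul_of_nonneg_left (h i hi) (hw0 i)

namespace Tuple

variable {n : ℕ} {α : Type*} [LinearOrder α]

lemma comp_sort_eq_of_map_eq {d e : Fin n → α}
    (h : Multiset.map d univ.val = Multiset.map e univ.val) : d ∘ sort d = e ∘ sort e := by
  refine List.ofFn_injective <| List.Perm.eq_of_sortedLE (monotone_sort d).sortedLE_ofFn
    (monotone_sort e).sortedLE_ofFn ?_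
  refine ((sort d).ofFn_comp_perm d).trans (List.Perm.trans ?_ ((sort e).ofFn_comp_perm e).symm)
  simpa using h

lemma card_filter_lt_apply_sort_le (e : Fin n → α) (m : Fin n) :
    #{i | e i < e (sort e m)} ≤ m := by
  rw [← Fin.card_Iio m]
  refine card_le_card_of_injOn (sort e).symm (fun i hi => ?_) (sort e).symm.injective.injOn
  have hi' : (e ∘ sort e) ((sort e).symm i) < (e ∘ sort e) m := by simpa using hi
  simpa using (monotone_sort e).reflect_lt hi'

lemma card_filter_apply_sort_lt_le (e : Fin n → α) (m : Fin n) :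
    #{i | e (sort e m) < e i} ≤ n - 1 - m := by
  rw [← Fin.card_Ioi m]
  refine card_le_card_of_injOn (sort e).symm (fun i hi => ?_) (sort e).symm.injective.injOn
  have hi' : (e ∘ sort e) m < (e ∘ sort e) ((sort e).symm i) := by simpa using hi
  simpa using (monotone_sort e).reflect_lt hi'

end Tuple

namespace Matrix

theorem exists_ne_zero_forall_mulVec_eq_zero {K ι κ κ' : Type*} [Field K] [Fintype ι]
    (M : Matrix κ ι K) (N : Matrix κ' ι K) (s : Finset κ) (t : Finset κ')
    (h : #s + #t < Fintype.card ι) :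
    ∃ v ≠ 0, (∀ i ∈ s, (M *ᵥ v) i = 0) ∧ ∀ i ∈ t, (N *ᵥ v) i = 0 := by
  let f : (ι → K) →ₗ[K] (s → K) × (t → K) :=
    (LinearMap.funLeft K K Subtype.val ∘ₗ M.mulVecLin).prod
      (LinearMap.funLeft K K Subtype.val ∘ₗ N.mulVecLin)
  have hker : LinearMap.ker f ≠ ⊥ :=
    LinearMap.ker_ne_bot_of_finrank_lt (by simpa [Module.finrank_prod] using h)
  obtain ⟨v, hv, hv0⟩ := Submodule.exists_mem_ne_zero_of_ne_bot hker
  simp only [f, LinearMap.ker_prod, Submodule.mem_inf, LinearMap.mem_ker, LinearMap.coe_comp,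
    Function.comp_apply, funext_iff, LinearMap.funLeft_apply, Pi.zero_apply, Subtype.forall] at hv
  exact ⟨v, hv0, hv⟩

variable {ι : Type*} [Fintype ι]

noncomputable def rayleighQuotient (M : Matrix ι ι ℂ) (v : ι → ℂ) : ℝ :=
  (star v ⬝ᵥ (M *ᵥ v)).re / (star v ⬝ᵥ v).re

lemma rayleighQuotient_smul_add_smul (a b : ℝ) (M N : Matrix ι ι ℂ) (v : ι → ℂ) :
    rayleighQuotient (a • M + b • N) v = a * rayleighQuotient M v + b * rayleighQuotient N v := by
  simp [rayleighQuotient, add_mulVec, smul_mulVec, dotProduct_add, add_div, mul_div_assoc]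

variable [DecidableEq ι]

lemma re_star_dotProduct_unitary_conj_diagonal_mulVec (U : unitaryGroup ι ℂ) (d : ι → ℝ)
    (v : ι → ℂ) :
    (star v ⬝ᵥ (((U : Matrix ι ι ℂ) * diagonal (fun i => (d i : ℂ)) *
      star (U : Matrix ι ι ℂ)) *ᵥ v)).re
      = ∑ i, d i * Complex.normSq ((star (U : Matrix ι ι ℂ) *ᵥ v) i) := by
  set x := star (U : Matrix ι ι ℂ) *ᵥ v
  have hx : star v ᵥ* (U : Matrix ι ι ℂ) = star x := by
    rw [star_mulVec, star_eq_conjTranspose, conjTranspose_conjTranspose]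
  rw [← mulVec_mulVec, ← mulVec_mulVec, dotProduct_mulVec, hx]
  simp only [dotProduct, mulVec_diagonal, Complex.re_sum]
  refine sum_congr rfl fun i _ => ?_
  rw [Pi.star_apply, RCLike.star_def, mul_left_comm, ← Complex.normSq_eq_conj_mul_self,
    ← Complex.ofReal_mul, Complex.ofReal_re]

lemma sum_normSq_star_mulVec (U : unitaryGroup ι ℂ) (v : ι → ℂ) :
    ∑ i, Complex.normSq ((star (U : Matrix ι ι ℂ) *ᵥ v) i) = (star v ⬝ᵥ v).re := by
  simpa using (re_star_dotProduct_unitary_conj_diagonal_mulVec U 1 v).symm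

noncomputable def rayleighWeight (U : unitaryGroup ι ℂ) (v : ι → ℂ) (i : ι) : ℝ :=
  Complex.normSq ((star (U : Matrix ι ι ℂ) *ᵥ v) i) / (star v ⬝ᵥ v).re

lemma rayleighWeight_nonneg (U : unitaryGroup ι ℂ) (v : ι → ℂ) (i : ι) :
    0 ≤ rayleighWeight U v i :=
  div_nonneg (Complex.normSq_nonneg _)
    (by simpa using Complex.re_le_re (dotProduct_star_self_nonneg v))

lemma sum_rayleighWeight (U : unitaryGroup ι ℂ) {v : ι → ℂ} (hv : v ≠ 0) :
    ∑ i, rayleighWeight U v i = 1 := by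
  simp only [rayleighWeight]
  rw [← sum_div, sum_normSq_star_mulVec]
  exact div_self (Complex.pos_iff.mp (dotProduct_star_self_pos_iff.mpr hv)).1.ne'

lemma rayleighQuotient_unitary_conj_diagonal (U : unitaryGroup ι ℂ) (d : ι → ℝ) (v : ι → ℂ) :
    rayleighQuotient ((U : Matrix ι ι ℂ) * diagonal (fun i => (d i : ℂ)) *
      star (U : Matrix ι ι ℂ)) v = ∑ i, rayleighWeight U v i * d i := by
  simp only [rayleighQuotient, re_star_dotProduct_unitary_conj_diagonal_mulVec, rayleighWeight,
    sum_div]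
  exact sum_congr rfl fun i _ => by ring

lemma IsHermitian.rayleighQuotient_eq {M : Matrix ι ι ℂ} (hM : M.IsHermitian) (v : ι → ℂ) :
    rayleighQuotient M v = ∑ i, rayleighWeight hM.eigenvectorUnitary v i * hM.eigenvalues i := by
  conv_lhs => rw [hM.spectral_theorem, Unitary.conjStarAlgAut_apply]
  exact rayleighQuotient_unitary_conj_diagonal _ _ _

lemma rayleighQuotient_nonneg {M : Matrix ι ι ℂ} (hM : M.PosSemidef) (v : ι → ℂ) :
    0 ≤ rayleighQuotient M v := by
  rw [hM.1.rayleighQuotient_eq]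
  exact sum_nonneg fun i _ => mul_nonneg (rayleighWeight_nonneg _ _ _) (hM.eigenvalues_nonneg i)

end Matrix

section Spectrum

variable {n : ℕ}

lemma herFun_eq {M : Matrix (Fin n) (Fin n) ℂ} (hM : M.IsHermitian) (f : ℝ → ℝ) :
    herFun f M = (hM.eigenvectorUnitary : Matrix (Fin n) (Fin n) ℂ) *
      diagonal (fun i => (f (hM.eigenvalues i) : ℂ)) *
      star (hM.eigenvectorUnitary : Matrix (Fin n) (Fin n) ℂ) :=
  dif_pos hM

lemma eigVal_eq {M : Matrix (Fin n) (Fin n) ℂ} (hM : M.IsHermitian) (j : Fin n) :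
    eigVal M j = hM.eigenvalues (Tuple.sort hM.eigenvalues j.rev) :=
  dif_pos hM

lemma eigVal_unitary_conj_diagonal (U : unitaryGroup (Fin n) ℂ) (d : Fin n → ℝ) (j : Fin n) :
    eigVal ((U : Matrix (Fin n) (Fin n) ℂ) * diagonal (fun i => (d i : ℂ)) *
      star (U : Matrix (Fin n) (Fin n) ℂ)) j = d (Tuple.sort d j.rev) := by
  set M := (U : Matrix (Fin n) (Fin n) ℂ) * diagonal (fun i => (d i : ℂ)) *
      star (U : Matrix (Fin n) (Fin n) ℂ)
  have hM : M.IsHermitian := isHermitian_mul_mul_conjTranspose _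
    (isHermitian_diagonal_of_self_adjoint _ (by ext; simp))
  have hcharpoly : M.charpoly = ∏ i, (Polynomial.X - Polynomial.C (d i : ℂ)) := by
    rw [charpoly_mul_comm, ← mul_assoc, UnitaryGroup.star_mul_self, one_mul, charpoly_diagonal]
  have hroots : Multiset.map Complex.ofReal (Multiset.map hM.eigenvalues univ.val) =
      Multiset.map Complex.ofReal (Multiset.map d univ.val) := by
    have h := hM.roots_charpoly_eq_eigenvalues
    rw [hcharpoly, Polynomial.roots_prod _ _
      (prod_ne_zero_iff.mpr fun i _ => Polynomial.X_sub_C_ne_zero _)] at h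
    simp only [Polynomial.roots_X_sub_C, Multiset.bind_singleton] at h
    rw [Multiset.map_map, Multiset.map_map]
    exact h.symm
  have hsort := Tuple.comp_sort_eq_of_map_eq
    (Multiset.map_injective Complex.ofReal_injective hroots)
  rw [eigVal_eq hM]
  exact congrFun hsort j.rev

lemma eigVal_herFun {M : Matrix (Fin n) (Fin n) ℂ} (hM : M.IsHermitian) {f : ℝ → ℝ}
    (hf : MonotoneOn f (Set.range hM.eigenvalues)) (j : Fin n) :
    eigVal (herFun f M) j = f (eigVal M j) := by
  have hmono : Monotone ((f ∘ hM.eigenvalues) ∘ Tuple.sort hM.eigenvalues) :=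
    fun a b hab => hf ⟨_, rfl⟩ ⟨_, rfl⟩ (Tuple.monotone_sort hM.eigenvalues hab)
  rw [herFun_eq hM, eigVal_unitary_conj_diagonal, eigVal_eq hM]
  exact congrFun (Tuple.unique_monotone (Tuple.monotone_sort _) hmono) j.rev

lemma eigVal_nonneg {M : Matrix (Fin n) (Fin n) ℂ} (hM : M.PosSemidef) (j : Fin n) :
    0 ≤ eigVal M j := by
  rw [eigVal_eq hM.1]
  exact hM.eigenvalues_nonneg _

lemma eigVal_mpow {M : Matrix (Fin n) (Fin n) ℂ} (hM : M.PosSemidef) {r : ℝ} (hr : 0 ≤ r)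
    (j : Fin n) : eigVal (mpow M r) j = eigVal M j ^ r := by
  refine eigVal_herFun hM.1 ?_ j
  rintro _ ⟨a, rfl⟩ _ ⟨b, rfl⟩ hab
  exact Real.rpow_le_rpow (hM.eigenvalues_nonneg a) hab hr

lemma Matrix.PosSemidef.mpow {M : Matrix (Fin n) (Fin n) ℂ} (hM : M.PosSemidef) (r : ℝ) :
    (mpow M r).PosSemidef := by
  rw [_root_.mpow, herFun_eq hM.1]
  refine PosSemidef.mul_mul_conjTranspose_same (posSemidef_diagonal_iff.mpr fun i => ?_) _
  exact Complex.zero_le_real.mpr (Real.rpow_nonneg (hM.eigenvalues_nonneg i) r)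

theorem exists_eigVal_le_rayleighQuotient_and_rayleighQuotient_le_eigVal
    {C D : Matrix (Fin n) (Fin n) ℂ} (hC : C.IsHermitian) (hD : D.IsHermitian) (j : Fin n) :
    ∃ v ≠ 0, eigVal C j ≤ rayleighQuotient C v ∧ rayleighQuotient D v ≤ eigVal D j := by
  have hcardC := Tuple.card_filter_lt_apply_sort_le hC.eigenvalues j.rev
  have hcardD := Tuple.card_filter_apply_sort_lt_le hD.eigenvalues j.rev
  rw [← eigVal_eq] at hcardC hcardD
  obtain ⟨v, hv, hvC, hvD⟩ := exists_ne_zero_forall_mulVec_eq_zero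
    (star (hC.eigenvectorUnitary : Matrix (Fin n) (Fin n) ℂ))
    (star (hD.eigenvectorUnitary : Matrix (Fin n) (Fin n) ℂ))
    {i | hC.eigenvalues i < eigVal C j} {i | eigVal D j < hD.eigenvalues i}
    (by simp only [Fin.val_rev, Fintype.card_fin] at hcardC hcardD ⊢; omega)
  refine ⟨v, hv, ?_, ?_⟩
  · rw [hC.rayleighQuotient_eq]
    refine le_sum_mul_of_forall_ne_zero (rayleighWeight_nonneg _ _) (sum_rayleighWeight _ hv)
      fun i hi => le_of_not_gt fun hlt => hi ?_
    rw [rayleighWeight, hvC i (by simpa using hlt), Complex.normSq_zero, zero_div]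
  · rw [hD.rayleighQuotient_eq]
    refine sum_mul_le_of_forall_ne_zero (rayleighWeight_nonneg _ _) (sum_rayleighWeight _ hv)
      fun i hi => le_of_not_gt fun hlt => hi ?_
    rw [rayleighWeight, hvD i (by simpa using hlt), Complex.normSq_zero, zero_div]

theorem rayleighQuotient_mpow_rpow_le {A : Matrix (Fin n) (Fin n) ℂ} (hA : A.PosSemidef)
    (p : ℝ) {s : ℝ} (hs : 1 ≤ s) {v : Fin n → ℂ} (hv : v ≠ 0) :
    rayleighQuotient (mpow A p) v ^ s ≤ rayleighQuotient (mpow A (p * s)) v := by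
  simp only [mpow, herFun_eq hA.1, rayleighQuotient_unitary_conj_diagonal]
  calc _ ≤ ∑ i, rayleighWeight hA.1.eigenvectorUnitary v i * (hA.1.eigenvalues i ^ p) ^ s :=
        Real.rpow_arith_mean_le_arith_mean_rpow _ _ _ (fun i _ => rayleighWeight_nonneg _ _ i)
          (sum_rayleighWeight _ hv) (fun i _ => Real.rpow_nonneg (hA.eigenvalues_nonneg i) p) hs
    _ = _ := by simp_rw [← Real.rpow_mul (hA.eigenvalues_nonneg _)]

theorem rayleighQuotient_convex_mpow_rpow_le {A B : Matrix (Fin n) (Fin n) ℂ}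
    (hA : A.PosSemidef) (hB : B.PosSemidef) {t : ℝ} (ht0 : 0 ≤ t) (ht1 : t ≤ 1)
    (p : ℝ) {s : ℝ} (hs : 1 ≤ s) {v : Fin n → ℂ} (hv : v ≠ 0) :
    rayleighQuotient ((1 - t) • mpow A p + t • mpow B p) v ^ s ≤
      rayleighQuotient ((1 - t) • mpow A (p * s) + t • mpow B (p * s)) v := by
  simp only [rayleighQuotient_smul_add_smul]
  calc _ ≤ (1 - t) * rayleighQuotient (mpow A p) v ^ s + t * rayleighQuotient (mpow B p) v ^ s :=
        (convexOn_rpow hs).2 (rayleighQuotient_nonneg (hA.mpow p) v)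
          (rayleighQuotient_nonneg (hB.mpow p) v) (by linarith) ht0 (by ring)
    _ ≤ _ := add_le_add
        (mul_le_mul_of_nonneg_left (rayleighQuotient_mpow_rpow_le hA p hs hv) (by linarith))
        (mul_le_mul_of_nonneg_left (rayleighQuotient_mpow_rpow_le hB p hs hv) ht0)

end Spectrum

/-- for positive definite `A, B`, `t ∈ [0,1]` and `0 < p ≤ p'`,
`λ_j(((1-t)Aᵖ + tBᵖ)^{1/p}) ≤ λ_j(((1-t)A^{p'} + tB^{p'})^{1/p'})`. -/
theorem stmt1 {n : ℕ} (A B : Matrix (Fin n) (Fin n) ℂ) (hA : A.PosDef) (hB : B.PosDef)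
    (t : ℝ) (ht0 : 0 ≤ t) (ht1 : t ≤ 1)
    (p p' : ℝ) (hp : 0 < p) (hpp' : p ≤ p') (j : Fin n) :
    eigVal (mpow ((1 - t) • mpow A p + t • mpow B p) (1 / p)) j ≤
      eigVal (mpow ((1 - t) • mpow A p' + t • mpow B p') (1 / p')) j := by
  have hp' : 0 < p' := hp.trans_le hpp'
  have hs : 1 ≤ p' / p := (one_le_div hp).mpr hpp'
  have hpsd : ∀ r, ((1 - t) • mpow A r + t • mpow B r).PosSemidef := fun r =>
    ((hA.posSemidef.mpow r).smul (sub_nonneg.mpr ht1)).add ((hB.posSemidef.mpow r).smul ht0)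
  have hC := hpsd p
  have hD := hpsd p'
  set C := (1 - t) • mpow A p + t • mpow B p
  set D := (1 - t) • mpow A p' + t • mpow B p'
  obtain ⟨v, hv, hCv, hDv⟩ :=
    exists_eigVal_le_rayleighQuotient_and_rayleighQuotient_le_eigVal hC.1 hD.1 j
  have hC0 := eigVal_nonneg hC j
  have key : eigVal C j ^ (p' / p) ≤ eigVal D j :=
    calc _ ≤ rayleighQuotient C v ^ (p' / p) := Real.rpow_le_rpow hC0 hCv (by positivity)
      _ ≤ rayleighQuotient D v := by
          simpa only [mul_div_cancel₀ p' hp.ne'] using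
            rayleighQuotient_convex_mpow_rpow_le hA.posSemidef hB.posSemidef ht0 ht1 p hs hv
      _ ≤ _ := hDv
  rw [eigVal_mpow hC (by positivity), eigVal_mpow hD (by positivity)]
  calc eigVal C j ^ (1 / p) = (eigVal C j ^ (p' / p)) ^ (1 / p') := by
        rw [← Real.rpow_mul hC0]
        field_simp
    _ ≤ eigVal D j ^ (1 / p') := Real.rpow_le_rpow (Real.rpow_nonneg hC0 _) key (by positivity)
end

section
/- Let A and B be n×n complex positive definite matrices, t ∈ [0,1], and let p ≤ p' < 0. Then for each j ∈ {1,…,n}, λ_j(((1-t)A^p + tB^p)^{1/p}) ≤ λ_j(((1-t)A^{p'} + tB^{p'})^{1/p'}). -/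
open scoped BigOperators ComplexOrder

/-! With `s = p / p' ≥ 1` and `μ` the `j`-th smallest eigenvalue of `D = (1-t)A^{p'} + tB^{p'}`,
the tangent line of `y ↦ y^s` at `μ` lies below the curve, so in the Loewner order
`A^p = (A^{p'})^s ≥ (1-s)μ^s + sμ^{s-1} A^{p'}`, and likewise for `B`. Averaging gives
`C = (1-t)A^p + tB^p ≥ (1-s)μ^s + sμ^{s-1} D`, whose `j`-th smallest eigenvalue is `μ^s`, so Weyl's
monotonicity principle yields `λ↑_j(C) ≥ μ^s`. Finally `x ↦ x^{1/p}` is antitone and swaps the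
increasing order for the decreasing one: `λ_j(C^{1/p}) ≤ μ^{s/p} = λ_j(D^{1/p'})`. -/

open Matrix Module Submodule RCLike

section Sorting

variable {n : ℕ}

noncomputable def sortAsc (v : Fin n → ℝ) : Fin n → ℝ := v ∘ Tuple.sort v

lemma monotone_sortAsc (v : Fin n → ℝ) : Monotone (sortAsc v) := Tuple.monotone_sort v

lemma sortAsc_comp_of_monotone {g : ℝ → ℝ} (hg : Monotone g) (v : Fin n → ℝ) :
    sortAsc (g ∘ v) = g ∘ sortAsc v :=
  Tuple.unique_monotone (Tuple.monotone_sort _) (hg.comp (monotone_sortAsc v))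

lemma sortAsc_comp_of_antitoneOn {g : ℝ → ℝ} {v : Fin n → ℝ} (hg : AntitoneOn g (Set.range v))
    (k : Fin n) : sortAsc (g ∘ v) k = g (sortAsc v k.rev) := by
  have hanti : Monotone ((g ∘ v) ∘ (Fin.revPerm.trans (Tuple.sort v))) := fun i j hij =>
    hg (Set.mem_range_self _) (Set.mem_range_self _)
      (monotone_sortAsc v (Fin.rev_le_rev.mpr hij))
  exact congrFun (Tuple.unique_monotone (Tuple.monotone_sort _) hanti) k

end Sorting

section Weyl

variable {𝕜 E : Type*} [RCLike 𝕜] [NormedAddCommGroup E] [InnerProductSpace 𝕜 E]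
  {T T' : E →ₗ[𝕜] E}

local notation "⟪" x ", " y "⟫" => inner 𝕜 x y

lemma Orthonormal.re_inner_map_sum {ι : Type*} [Fintype ι] {u : ι → E} {d : ι → ℝ}
    (hu : Orthonormal 𝕜 u) (hTu : ∀ i, T (u i) = (d i : 𝕜) • u i) (c : ι → 𝕜) :
    re ⟪∑ i, c i • u i, T (∑ i, c i • u i)⟫ = ∑ i, d i * ‖c i‖ ^ 2 := by
  have hT : T (∑ i, c i • u i) = ∑ i, (c i * d i) • u i := by
    simp only [map_sum, map_smul, hTu, smul_smul]
  rw [hT, hu.inner_sum, map_sum]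
  refine Finset.sum_congr rfl fun i _ => ?_
  rw [← mul_assoc, RCLike.conj_mul, mul_comm]
  norm_cast

lemma Orthonormal.norm_sum_sq {ι : Type*} [Fintype ι] {u : ι → E} (hu : Orthonormal 𝕜 u)
    (c : ι → 𝕜) : ‖∑ i, c i • u i‖ ^ 2 = ∑ i, ‖c i‖ ^ 2 := by
  rw [← inner_self_eq_norm_sq (𝕜 := 𝕜)]
  simpa using hu.re_inner_map_sum (T := LinearMap.id) (d := 1) (by simp) c

lemma Orthonormal.mul_norm_sq_le_re_inner_map {ι : Type*} {u : ι → E} {d : ι → ℝ}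
    (hu : Orthonormal 𝕜 u) (hTu : ∀ i, T (u i) = (d i : 𝕜) • u i) {s : Set ι} {m : ℝ}
    (hm : ∀ i ∈ s, m ≤ d i) {x : E} (hx : x ∈ span 𝕜 (u '' s)) :
    m * ‖x‖ ^ 2 ≤ re ⟪x, T x⟫ := by
  obtain ⟨t, hts, c, rfl⟩ := (mem_span_image_iff_exists_fun 𝕜).mp hx
  have hut : Orthonormal 𝕜 (fun i : t => u i) := hu.comp _ Subtype.val_injective
  rw [hut.norm_sum_sq c, hut.re_inner_map_sum (fun i => hTu i) c, Finset.mul_sum]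
  exact Finset.sum_le_sum fun i _ =>
    mul_le_mul_of_nonneg_right (hm i (hts i.2)) (sq_nonneg _)

lemma Orthonormal.re_inner_map_le_mul_norm_sq {ι : Type*} {u : ι → E} {d : ι → ℝ}
    (hu : Orthonormal 𝕜 u) (hTu : ∀ i, T (u i) = (d i : 𝕜) • u i) {s : Set ι} {M : ℝ}
    (hM : ∀ i ∈ s, d i ≤ M) {x : E} (hx : x ∈ span 𝕜 (u '' s)) :
    re ⟪x, T x⟫ ≤ M * ‖x‖ ^ 2 := by
  have hneg : ∀ i, (-T) (u i) = ((-d i : ℝ) : 𝕜) • u i := fun i => by simp [hTu]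
  have := hu.mul_norm_sq_le_re_inner_map hneg (m := -M) (fun i hi => neg_le_neg (hM i hi)) hx
  simpa using this

lemma Orthonormal.finrank_span_image {ι : Type*} {u : ι → E} (hu : Orthonormal 𝕜 u)
    (s : Finset ι) : finrank 𝕜 (span 𝕜 (u '' s)) = s.card := by
  rw [Set.image_eq_range]
  exact (finrank_span_eq_card (hu.comp _ Subtype.val_injective).linearIndependent).trans (by simp)

lemma exists_ne_zero_mem_inf_of_finrank_lt [FiniteDimensional 𝕜 E] {V W : Submodule 𝕜 E}
    (h : finrank 𝕜 E < finrank 𝕜 V + finrank 𝕜 W) : ∃ x ∈ V ⊓ W, x ≠ 0 := by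
  by_contra! hVW
  exact h.not_ge (finrank_add_finrank_le_of_disjoint
    (disjoint_def.mpr fun x hxV hxW => hVW x ⟨hxV, hxW⟩))

theorem Orthonormal.le_of_monotone_of_re_inner_le {n : ℕ} [FiniteDimensional 𝕜 E]
    (hE : finrank 𝕜 E ≤ n) {u w : Fin n → E} {d e : Fin n → ℝ}
    (hu : Orthonormal 𝕜 u) (hw : Orthonormal 𝕜 w)
    (hTu : ∀ i, T (u i) = (d i : 𝕜) • u i) (hTw : ∀ i, T' (w i) = (e i : 𝕜) • w i)
    (hd : Monotone d) (he : Monotone e) (hle : ∀ x, re ⟪x, T x⟫ ≤ re ⟪x, T' x⟫) (k : Fin n) :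
    d k ≤ e k := by
  have hdim : finrank 𝕜 E < finrank 𝕜 (span 𝕜 (u '' ↑(Finset.Ici k))) +
      finrank 𝕜 (span 𝕜 (w '' ↑(Finset.Iic k))) := by
    rw [hu.finrank_span_image, hw.finrank_span_image, Fin.card_Ici, Fin.card_Iic]
    omega
  -- `n - k` eigenvectors with eigenvalue `≥ d k` and `k + 1` with eigenvalue `≤ e k` share a vector
  obtain ⟨x, ⟨hxu, hxw⟩, hx0⟩ := exists_ne_zero_mem_inf_of_finrank_lt hdim
  have hlow := hu.mul_norm_sq_le_re_inner_map hTu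
    (fun i hi => hd (Finset.mem_Ici.mp hi)) hxu
  have hhigh := hw.re_inner_map_le_mul_norm_sq hTw
    (fun i hi => he (Finset.mem_Iic.mp hi)) hxw
  have hx : 0 < ‖x‖ ^ 2 := by positivity
  exact le_of_mul_le_mul_right ((hlow.trans (hle x)).trans hhigh) hx

theorem Orthonormal.sortAsc_le_of_re_inner_le {n : ℕ} [FiniteDimensional 𝕜 E]
    (hE : finrank 𝕜 E ≤ n) {u w : Fin n → E} {d e : Fin n → ℝ}
    (hu : Orthonormal 𝕜 u) (hw : Orthonormal 𝕜 w)
    (hTu : ∀ i, T (u i) = (d i : 𝕜) • u i) (hTw : ∀ i, T' (w i) = (e i : 𝕜) • w i)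
    (hle : ∀ x, re ⟪x, T x⟫ ≤ re ⟪x, T' x⟫) (k : Fin n) :
    sortAsc d k ≤ sortAsc e k :=
  le_of_monotone_of_re_inner_le hE (hu.comp _ (Tuple.sort d).injective)
    (hw.comp _ (Tuple.sort e).injective) (fun _ => hTu _) (fun _ => hTw _)
    (monotone_sortAsc d) (monotone_sortAsc e) hle k

end Weyl

section ConjDiag

variable {𝕜 : Type*} [RCLike 𝕜] {ι : Type*} [Fintype ι] [DecidableEq ι]

noncomputable def conjDiag (U : unitaryGroup ι 𝕜) (d : ι → ℝ) : Matrix ι ι 𝕜 :=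
  (U : Matrix ι ι 𝕜) * diagonal (fun i => (d i : 𝕜)) * star (U : Matrix ι ι 𝕜)

variable (U : unitaryGroup ι 𝕜)

lemma Matrix.IsHermitian.conjDiag_eigenvectorUnitary {A : Matrix ι ι 𝕜} (hA : A.IsHermitian) :
    conjDiag hA.eigenvectorUnitary hA.eigenvalues = A := by
  conv_rhs => rw [hA.spectral_theorem]
  rfl

lemma isHermitian_conjDiag (d : ι → ℝ) : (conjDiag U d).IsHermitian := by
  refine isHermitian_mul_mul_conjTranspose _ (isHermitian_diagonal_of_self_adjoint _ ?_)
  ext i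
  simp

lemma posSemidef_conjDiag {d : ι → ℝ} (hd : ∀ i, 0 ≤ d i) : (conjDiag U d).PosSemidef := by
  rw [conjDiag, Unitary.isUnit_coe.posSemidef_star_right_conjugate_iff, posSemidef_diagonal_iff]
  exact fun i => RCLike.ofReal_nonneg.mpr (hd i)

lemma posDef_conjDiag {d : ι → ℝ} (hd : ∀ i, 0 < d i) : (conjDiag U d).PosDef := by
  rw [conjDiag, IsUnit.posDef_star_right_conjugate_iff Unitary.isUnit_coe, posDef_diagonal_iff]
  exact fun i => RCLike.ofReal_pos.mpr (hd i)

lemma conjDiag_sub (d e : ι → ℝ) : conjDiag U d - conjDiag U e = conjDiag U (d - e) := by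
  simp only [conjDiag, ← mul_sub, ← sub_mul, diagonal_sub, Pi.sub_apply, RCLike.ofReal_sub]

lemma smul_one_add_smul_conjDiag (a b : ℝ) (d : ι → ℝ) :
    a • (1 : Matrix ι ι 𝕜) + b • conjDiag U d = conjDiag U (fun i => a + b * d i) := by
  have hdiag : diagonal (fun i => ((a + b * d i : ℝ) : 𝕜)) =
      a • (1 : Matrix ι ι 𝕜) + b • diagonal (fun i => (d i : 𝕜)) := by
    ext i j
    rcases eq_or_ne i j with rfl | h
    · simp [RCLike.real_smul_eq_coe_mul]
    · simp [h]
  rw [conjDiag, conjDiag, hdiag, mul_add, add_mul, mul_smul_comm, smul_mul_assoc, mul_one,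
    Unitary.mul_star_self_of_mem U.2, mul_smul_comm, smul_mul_assoc]

lemma orthonormal_toLp_mulVec_single :
    Orthonormal 𝕜 (fun j => WithLp.toLp 2 ((U : Matrix ι ι 𝕜) *ᵥ Pi.single j 1)) := by
  rw [orthonormal_iff_ite]
  intro i j
  rw [EuclideanSpace.inner_eq_star_dotProduct, mulVec_single_one, mulVec_single_one]
  have hU : star (U : Matrix ι ι 𝕜) * U = 1 := mem_unitaryGroup_iff'.mp U.2
  simpa [dotProduct, mul_apply, mul_comm, one_apply] using congr($hU i j)

lemma toEuclideanLin_conjDiag_toLp_mulVec_single (d : ι → ℝ) (j : ι) :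
    toEuclideanLin (conjDiag U d) (WithLp.toLp 2 ((U : Matrix ι ι 𝕜) *ᵥ Pi.single j 1)) =
      (d j : 𝕜) • WithLp.toLp 2 ((U : Matrix ι ι 𝕜) *ᵥ Pi.single j 1) := by
  rw [toLpLin_apply, conjDiag, mulVec_mulVec, mul_assoc, mul_assoc,
    Unitary.star_mul_self_of_mem U.2, mul_one, ← mulVec_mulVec, diagonal_mulVec_single,
    ← smul_eq_mul, Pi.single_smul', mulVec_smul, WithLp.toLp_smul]

end ConjDiag

section Eigenvalues

variable {𝕜 : Type*} [RCLike 𝕜] {n : ℕ}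

theorem sortAsc_le_of_posSemidef_sub {U V : unitaryGroup (Fin n) 𝕜} {d e : Fin n → ℝ}
    (h : (conjDiag V e - conjDiag U d).PosSemidef) (k : Fin n) : sortAsc d k ≤ sortAsc e k := by
  refine (orthonormal_toLp_mulVec_single U).sortAsc_le_of_re_inner_le (by simp)
    (orthonormal_toLp_mulVec_single V) (toEuclideanLin_conjDiag_toLp_mulVec_single U d)
    (toEuclideanLin_conjDiag_toLp_mulVec_single V e) (fun x => ?_) k
  have := (isPositive_toEuclideanLin_iff.mpr h).re_inner_nonneg_right x
  rw [map_sub, LinearMap.sub_apply, inner_sub_right, map_sub] at this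
  linarith

theorem sortAsc_eq_of_conjDiag_eq {U V : unitaryGroup (Fin n) 𝕜} {d e : Fin n → ℝ}
    (h : conjDiag U d = conjDiag V e) : sortAsc d = sortAsc e := by
  have h₀ : (conjDiag V e - conjDiag U d).PosSemidef := by simpa [h] using PosSemidef.zero
  have h₁ : (conjDiag U d - conjDiag V e).PosSemidef := by simpa [h] using PosSemidef.zero
  exact funext fun k => le_antisymm (sortAsc_le_of_posSemidef_sub h₀ k)
    (sortAsc_le_of_posSemidef_sub h₁ k)

theorem add_mul_sortAsc_le_of_posSemidef_sub {C D : Matrix (Fin n) (Fin n) 𝕜}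
    (hC : C.IsHermitian) (hD : D.IsHermitian) {a b : ℝ} (hb : 0 ≤ b)
    (h : (C - (a • 1 + b • D)).PosSemidef) (k : Fin n) :
    a + b * sortAsc hD.eigenvalues k ≤ sortAsc hC.eigenvalues k := by
  rw [← hD.conjDiag_eigenvectorUnitary, smul_one_add_smul_conjDiag,
    ← hC.conjDiag_eigenvectorUnitary] at h
  have := sortAsc_le_of_posSemidef_sub h k
  rwa [← Function.comp_def (fun y => a + b * y),
    sortAsc_comp_of_monotone (fun x y hxy => by gcongr)] at this

end Eigenvalues

section FunctionalCalculus

variable {n : ℕ}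

lemma herFun_eq_conjDiag {A : Matrix (Fin n) (Fin n) ℂ} (hA : A.IsHermitian) (f : ℝ → ℝ) :
    herFun f A = conjDiag hA.eigenvectorUnitary (f ∘ hA.eigenvalues) := by
  rw [herFun, dif_pos hA]
  rfl

lemma eigVal_conjDiag (U : unitaryGroup (Fin n) ℂ) (d : Fin n → ℝ) (j : Fin n) :
    eigVal (conjDiag U d) j = sortAsc d j.rev := by
  have hH := isHermitian_conjDiag U d
  rw [eigVal, dif_pos hH]
  exact congrFun (sortAsc_eq_of_conjDiag_eq hH.conjDiag_eigenvectorUnitary) j.rev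

lemma eigVal_herFun_of_antitoneOn {A : Matrix (Fin n) (Fin n) ℂ} (hA : A.IsHermitian)
    {f : ℝ → ℝ} (hf : AntitoneOn f (Set.range hA.eigenvalues)) (j : Fin n) :
    eigVal (herFun f A) j = f (sortAsc hA.eigenvalues j) := by
  rw [herFun_eq_conjDiag hA, eigVal_conjDiag, sortAsc_comp_of_antitoneOn hf, Fin.rev_rev]

lemma posSemidef_herFun_sub_smul_one_add_smul {A : Matrix (Fin n) (Fin n) ℂ}
    (hA : A.IsHermitian) {f g : ℝ → ℝ} {a b : ℝ}
    (h : ∀ i, a + b * f (hA.eigenvalues i) ≤ g (hA.eigenvalues i)) :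
    (herFun g A - (a • 1 + b • herFun f A)).PosSemidef := by
  rw [herFun_eq_conjDiag hA, herFun_eq_conjDiag hA, smul_one_add_smul_conjDiag, conjDiag_sub]
  exact posSemidef_conjDiag _ fun i => sub_nonneg.mpr (h i)

lemma Matrix.PosDef.mpow {A : Matrix (Fin n) (Fin n) ℂ} (hA : A.PosDef) (r : ℝ) :
    (mpow A r).PosDef := by
  rw [_root_.mpow, herFun_eq_conjDiag hA.1]
  exact posDef_conjDiag _ fun i => Real.rpow_pos_of_pos (hA.eigenvalues_pos i) r

lemma eigVal_mpow_of_nonpos {A : Matrix (Fin n) (Fin n) ℂ} (hA : A.PosDef) {r : ℝ} (hr : r ≤ 0)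
    (j : Fin n) : eigVal (mpow A r) j = sortAsc hA.1.eigenvalues j ^ r := by
  refine eigVal_herFun_of_antitoneOn hA.1 ?_ j
  rintro _ ⟨i, rfl⟩ _ _ hxy
  exact Real.rpow_le_rpow_of_nonpos (hA.eigenvalues_pos i) hxy hr

end FunctionalCalculus

lemma tangent_le_rpow {y μ s : ℝ} (hy : 0 ≤ y) (hμ : 0 < μ) (hs : 1 ≤ s) :
    (1 - s) * μ ^ s + s * μ ^ (s - 1) * y ≤ y ^ s := by
  have hbern := one_add_mul_self_le_rpow_one_add (s := y / μ - 1)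
    (by linarith [div_nonneg hy hμ.le]) hs
  rw [add_sub_cancel, Real.div_rpow hy hμ.le, le_div_iff₀ (Real.rpow_pos_of_pos hμ s)] at hbern
  rw [Real.rpow_sub_one hμ.ne']
  calc (1 - s) * μ ^ s + s * (μ ^ s / μ) * y = (1 + s * (y / μ - 1)) * μ ^ s := by
        field_simp; ring
    _ ≤ y ^ s := hbern

lemma tangent_rpow_self {μ s : ℝ} (hμ : 0 < μ) : (1 - s) * μ ^ s + s * μ ^ (s - 1) * μ = μ ^ s := by
  rw [Real.rpow_sub_one hμ.ne']
  field_simp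
  ring

lemma Matrix.PosDef.one_sub_smul_add_smul {ι 𝕜 : Type*} [Fintype ι] [RCLike 𝕜]
    {A B : Matrix ι ι 𝕜} (hA : A.PosDef) (hB : B.PosDef) {t : ℝ} (ht0 : 0 ≤ t) (ht1 : t ≤ 1) :
    ((1 - t) • A + t • B).PosDef := by
  rcases ht1.lt_or_eq with ht1 | rfl
  · exact (hA.smul (sub_pos.mpr ht1)).add_posSemidef (hB.posSemidef.smul ht0)
  · simpa using hB

lemma posSemidef_combination_mpow_sub_affine {n : ℕ} {A B : Matrix (Fin n) (Fin n) ℂ}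
    (hA : A.PosDef) (hB : B.PosDef) {t : ℝ} (ht0 : 0 ≤ t) (ht1 : t ≤ 1) {q r a b : ℝ}
    (h : ∀ y > 0, a + b * y ^ q ≤ y ^ r) :
    ((1 - t) • mpow A r + t • mpow B r -
      (a • 1 + b • ((1 - t) • mpow A q + t • mpow B q))).PosSemidef := by
  have hX {X : Matrix (Fin n) (Fin n) ℂ} (hX : X.PosDef) :
      (mpow X r - (a • 1 + b • mpow X q)).PosSemidef :=
    posSemidef_herFun_sub_smul_one_add_smul hX.1 fun i => h _ (hX.eigenvalues_pos i)
  have hsplit : (1 - t) • mpow A r + t • mpow B r -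
      (a • 1 + b • ((1 - t) • mpow A q + t • mpow B q)) =
      (1 - t) • (mpow A r - (a • 1 + b • mpow A q)) + t • (mpow B r - (a • 1 + b • mpow B q)) := by
    module
  rw [hsplit]
  exact ((hX hA).smul (sub_nonneg.mpr ht1)).add ((hX hB).smul ht0)

/-- for positive definite `A, B`, `t ∈ [0,1]` and `p ≤ p' < 0`,
`λ_j(((1-t)Aᵖ + tBᵖ)^{1/p}) ≤ λ_j(((1-t)A^{p'} + tB^{p'})^{1/p'})`. -/
theorem stmt2 {n : ℕ} (A B : Matrix (Fin n) (Fin n) ℂ) (hA : A.PosDef) (hB : B.PosDef)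
    (t : ℝ) (ht0 : 0 ≤ t) (ht1 : t ≤ 1)
    (p p' : ℝ) (hpp' : p ≤ p') (hp' : p' < 0) (j : Fin n) :
    eigVal (mpow ((1 - t) • mpow A p + t • mpow B p) (1 / p)) j ≤
      eigVal (mpow ((1 - t) • mpow A p' + t • mpow B p') (1 / p')) j := by
  have hp : p < 0 := hpp'.trans_lt hp'
  have hs : 1 ≤ p / p' := (one_le_div_of_neg hp').mpr hpp'
  have hC := (hA.mpow p).one_sub_smul_add_smul (hB.mpow p) ht0 ht1
  have hD := (hA.mpow p').one_sub_smul_add_smul (hB.mpow p') ht0 ht1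
  set μ := sortAsc hD.1.eigenvalues j
  have hμ : 0 < μ := hD.eigenvalues_pos _
  have hCD := posSemidef_combination_mpow_sub_affine hA hB ht0 ht1 fun y hy => by
    have := tangent_le_rpow (Real.rpow_pos_of_pos hy p').le hμ hs
    rwa [← Real.rpow_mul hy.le, mul_div_cancel₀ p hp'.ne] at this
  have hweyl := add_mul_sortAsc_le_of_posSemidef_sub hC.1 hD.1
    (mul_nonneg (by linarith) (Real.rpow_pos_of_pos hμ _).le) hCD j
  rw [tangent_rpow_self hμ] at hweyl
  rw [eigVal_mpow_of_nonpos hC (one_div_nonpos.mpr hp.le),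
    eigVal_mpow_of_nonpos hD (one_div_nonpos.mpr hp'.le)]
  calc sortAsc hC.1.eigenvalues j ^ (1 / p) ≤ (μ ^ (p / p')) ^ (1 / p) :=
        Real.rpow_le_rpow_of_nonpos (Real.rpow_pos_of_pos hμ _) hweyl (one_div_nonpos.mpr hp.le)
    _ = μ ^ (1 / p') := by
        rw [← Real.rpow_mul hμ.le]
        congr 1
        field_simp [hp.ne]
end

section
/- Let A and B be n×n complex positive definite matrices, t ∈ [0,1], and let p < 0 < p'. Then for each j ∈ {1,…,n}, λ_j(((1-t)A^p + tB^p)^{1/p}) ≤ λ_j(((1-t)A^{p'} + tB^{p'})^{1/p'}). -/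
open scoped BigOperators ComplexOrder

/-!
Put `L = (1 - t) log A + t log B`. For a unit vector `x` and any real `q`, Jensen's inequality
for `exp` in an eigenbasis of `A` gives `exp (q ⟪x, log A x⟫) ≤ ⟪x, A^q x⟫`, likewise for `B`, and
convexity of `exp` once more gives `exp (q ⟪x, L x⟫) ≤ ⟪x, ((1 - t) A^q + t B^q) x⟫`. On the span of
the `j` top eigenvectors of `L` (for `q > 0`), resp. of its `n - j + 1` bottom eigenvectors (for
`q < 0`), the left side is at least `exp (q λ_j(L))`, so the min-max principle gives
`λ_j(((1 - t) A^{p'} + t B^{p'})^{1/p'}) ≥ exp λ_j(L) ≥ λ_j(((1 - t) A^p + t B^p)^{1/p})`.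
-/

open Module Submodule
open scoped InnerProductSpace

section Eigenbasis

variable {𝕜 E ι : Type*} [RCLike 𝕜] [NormedAddCommGroup E] [InnerProductSpace 𝕜 E]

lemma exists_mem_inf_norm_eq_one_of_finrank_lt [FiniteDimensional 𝕜 E] {V W : Submodule 𝕜 E}
    (h : finrank 𝕜 E < finrank 𝕜 V + finrank 𝕜 W) : ∃ x ∈ V ⊓ W, ‖x‖ = 1 := by
  have hpos : 0 < finrank 𝕜 ↥(V ⊓ W) := by
    have := Submodule.finrank_sup_add_finrank_inf_eq V W
    have := Submodule.finrank_le (V ⊔ W)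
    omega
  obtain ⟨x, hx, hx0⟩ := Submodule.exists_mem_ne_zero_of_ne_bot
    (Submodule.one_le_finrank_iff.mp hpos)
  exact ⟨(‖x‖⁻¹ : 𝕜) • x, (V ⊓ W).smul_mem _ hx, norm_smul_inv_norm hx0⟩

lemma sub_card_le_finrank_orthogonal_span_image [FiniteDimensional 𝕜 E] (v : ι → E)
    (s : Finset ι) : finrank 𝕜 E - s.card ≤ finrank 𝕜 (span 𝕜 (v '' s))ᗮ := by
  have hspan : finrank 𝕜 (span 𝕜 (v '' s)) ≤ s.card := by
    classical
    have := (finrank_span_finset_le_card (R := 𝕜) (s.image v)).trans Finset.card_image_le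
    rwa [Finset.coe_image] at this
  have := (span 𝕜 (v '' s)).finrank_add_finrank_orthogonal
  omega

variable [Fintype ι] {T : E →ₗ[𝕜] E} {b : OrthonormalBasis ι 𝕜 E} {μ : ι → ℝ}

lemma re_inner_apply_eq_sum_of_eigenbasis (hb : ∀ i, T (b i) = (μ i : 𝕜) • b i) (x : E) :
    RCLike.re ⟪x, T x⟫_𝕜 = ∑ i, μ i * ‖⟪b i, x⟫_𝕜‖ ^ 2 := by
  have hTx : T x = ∑ i, (⟪b i, x⟫_𝕜 * μ i) • b i := by
    conv_lhs => rw [← b.sum_repr' x]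
    simp only [map_sum, map_smul, hb, smul_smul]
  rw [hTx, inner_sum, map_sum]
  refine Finset.sum_congr rfl fun i _ => ?_
  rw [inner_smul_right, ← inner_conj_symm x (b i), mul_right_comm, RCLike.mul_conj,
    ← RCLike.ofReal_pow, ← RCLike.ofReal_mul, RCLike.ofReal_re, mul_comm]

lemma re_inner_apply_le_of_mem_orthogonal (hb : ∀ i, T (b i) = (μ i : 𝕜) • b i)
    {s : Finset ι} {c : ℝ} (hμ : ∀ i ∉ s, μ i ≤ c) {x : E} (hx : x ∈ (span 𝕜 (b '' s))ᗮ) :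
    RCLike.re ⟪x, T x⟫_𝕜 ≤ c * ‖x‖ ^ 2 := by
  rw [re_inner_apply_eq_sum_of_eigenbasis hb, ← b.sum_sq_norm_inner_right x, Finset.mul_sum]
  refine Finset.sum_le_sum fun i _ => ?_
  by_cases hi : i ∈ s
  · simp [inner_right_of_mem_orthogonal (subset_span (Set.mem_image_of_mem b hi)) hx]
  · exact mul_le_mul_of_nonneg_right (hμ i hi) (by positivity)

lemma le_re_inner_apply_of_mem_orthogonal (hb : ∀ i, T (b i) = (μ i : 𝕜) • b i)
    {s : Finset ι} {c : ℝ} (hμ : ∀ i ∉ s, c ≤ μ i) {x : E} (hx : x ∈ (span 𝕜 (b '' s))ᗮ) :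
    c * ‖x‖ ^ 2 ≤ RCLike.re ⟪x, T x⟫_𝕜 := by
  rw [re_inner_apply_eq_sum_of_eigenbasis hb, ← b.sum_sq_norm_inner_right x, Finset.mul_sum]
  refine Finset.sum_le_sum fun i _ => ?_
  by_cases hi : i ∈ s
  · simp [inner_right_of_mem_orthogonal (subset_span (Set.mem_image_of_mem b hi)) hx]
  · exact mul_le_mul_of_nonneg_right (hμ i hi) (by positivity)

end Eigenbasis

section MinMax

variable {𝕜 E : Type*} [RCLike 𝕜] [NormedAddCommGroup E] [InnerProductSpace 𝕜 E]
  {T : E →ₗ[𝕜] E} {n : ℕ} {b : OrthonormalBasis (Fin n) 𝕜 E} {μ : Fin n → ℝ}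

-- The easy half of the Courant–Fischer min-max principle.
lemma le_of_forall_le_re_inner_apply (hμ : Antitone μ) (hb : ∀ i, T (b i) = (μ i : 𝕜) • b i)
    {V : Submodule 𝕜 E} {m : Fin n} (hV : (m : ℕ) < finrank 𝕜 V) {c : ℝ}
    (hc : ∀ x ∈ V, ‖x‖ = 1 → c ≤ RCLike.re ⟪x, T x⟫_𝕜) : c ≤ μ m := by
  have := Module.Finite.of_basis b.toBasis
  have hE : finrank 𝕜 E = n := by simpa using finrank_eq_card_basis b.toBasis
  have hW := sub_card_le_finrank_orthogonal_span_image (𝕜 := 𝕜) b (Finset.Iio m)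
  rw [Fin.card_Iio] at hW
  obtain ⟨x, hx, hx1⟩ := exists_mem_inf_norm_eq_one_of_finrank_lt
    (V := V) (W := (span 𝕜 (b '' Finset.Iio m))ᗮ) (by omega)
  calc c ≤ RCLike.re ⟪x, T x⟫_𝕜 := hc x hx.1 hx1
    _ ≤ μ m * ‖x‖ ^ 2 :=
      re_inner_apply_le_of_mem_orthogonal hb (fun i hi => hμ (not_lt.mp (by simpa using hi))) hx.2
    _ = μ m := by rw [hx1]; ring

lemma le_of_antitone_of_eigenbasis {b' : OrthonormalBasis (Fin n) 𝕜 E} {μ' : Fin n → ℝ}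
    (hμ : Antitone μ) (hμ' : Antitone μ') (hb : ∀ i, T (b i) = (μ i : 𝕜) • b i)
    (hb' : ∀ i, T (b' i) = (μ' i : 𝕜) • b' i) : μ' ≤ μ := by
  intro k
  have := Module.Finite.of_basis b.toBasis
  have hE : finrank 𝕜 E = n := by simpa using finrank_eq_card_basis b.toBasis
  have hV := sub_card_le_finrank_orthogonal_span_image (𝕜 := 𝕜) b' (Finset.Ioi k)
  rw [Fin.card_Ioi] at hV
  refine le_of_forall_le_re_inner_apply hμ hb (V := (span 𝕜 (b' '' Finset.Ioi k))ᗮ)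
    (by omega) fun x hx hx1 => ?_
  simpa [hx1] using le_re_inner_apply_of_mem_orthogonal hb'
    (fun i hi => hμ' (not_lt.mp (by simpa using hi))) hx

lemma eq_of_antitone_of_eigenbasis {b' : OrthonormalBasis (Fin n) 𝕜 E} {μ' : Fin n → ℝ}
    (hμ : Antitone μ) (hμ' : Antitone μ') (hb : ∀ i, T (b i) = (μ i : 𝕜) • b i)
    (hb' : ∀ i, T (b' i) = (μ' i : 𝕜) • b' i) : μ = μ' :=
  le_antisymm (le_of_antitone_of_eigenbasis hμ' hμ hb' hb)
    (le_of_antitone_of_eigenbasis hμ hμ' hb hb')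

end MinMax

section HermitianMatrix

open Matrix

variable {n : ℕ} {M : Matrix (Fin n) (Fin n) ℂ}

lemma isHermitian_smul_add_smul {P Q : Matrix (Fin n) (Fin n) ℂ} (hP : P.IsHermitian)
    (hQ : Q.IsHermitian) (a b : ℝ) : (a • P + b • Q).IsHermitian :=
  (hP.smul (.all a)).add (hQ.smul (.all b))

lemma herFun_eq_cfc (hM : M.IsHermitian) (f : ℝ → ℝ) : herFun f M = cfc f M := by
  rw [herFun, dif_pos hM, hM.cfc_eq, IsHermitian.cfc, Unitary.conjStarAlgAut_apply]
  rfl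

lemma herFun_isHermitian (hM : M.IsHermitian) (f : ℝ → ℝ) : (herFun f M).IsHermitian := by
  rw [herFun_eq_cfc hM]
  exact cfc_predicate f M

lemma toEuclideanLin_eigenvectorBasis (hM : M.IsHermitian) (i : Fin n) :
    toEuclideanLin M (hM.eigenvectorBasis i) = (hM.eigenvalues i : ℂ) • hM.eigenvectorBasis i := by
  simp [toLpLin_apply, hM.mulVec_eigenvectorBasis]

lemma toEuclideanLin_herFun_eigenvectorBasis (hM : M.IsHermitian) (f : ℝ → ℝ) (i : Fin n) :
    toEuclideanLin (herFun f M) (hM.eigenvectorBasis i) =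
      (f (hM.eigenvalues i) : ℂ) • hM.eigenvectorBasis i := by
  have h : herFun f M *ᵥ ⇑(hM.eigenvectorBasis i) =
      (f (hM.eigenvalues i) : ℂ) • ⇑(hM.eigenvectorBasis i) := by
    rw [herFun, dif_pos hM, ← mulVec_mulVec, ← mulVec_mulVec, hM.star_eigenvectorUnitary_mulVec,
      diagonal_mulVec_single, mul_one, ← hM.eigenvectorUnitary_mulVec, ← mulVec_smul,
      ← Pi.single_smul, smul_eq_mul, mul_one]
  simp [toLpLin_apply, h]

lemma eigVal_of_isHermitian (hM : M.IsHermitian) (i : Fin n) :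
    eigVal M i = hM.eigenvalues (Tuple.sort hM.eigenvalues i.rev) := by
  rw [eigVal, dif_pos hM]
  rfl

lemma eigVal_antitone (hM : M.IsHermitian) : Antitone (eigVal M) := fun i j hij => by
  rw [eigVal_of_isHermitian hM, eigVal_of_isHermitian hM]
  exact Tuple.monotone_sort hM.eigenvalues (Fin.rev_le_rev.mpr hij)

noncomputable def sortedEigenvectorBasis (hM : M.IsHermitian) :
    OrthonormalBasis (Fin n) ℂ (EuclideanSpace ℂ (Fin n)) :=
  hM.eigenvectorBasis.reindex (Fin.revPerm.trans (Tuple.sort hM.eigenvalues)).symm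

lemma sortedEigenvectorBasis_apply (hM : M.IsHermitian) (i : Fin n) :
    sortedEigenvectorBasis hM i = hM.eigenvectorBasis (Tuple.sort hM.eigenvalues i.rev) := by
  simp [sortedEigenvectorBasis]

lemma toEuclideanLin_sortedEigenvectorBasis (hM : M.IsHermitian) (i : Fin n) :
    toEuclideanLin M (sortedEigenvectorBasis hM i) =
      (eigVal M i : ℂ) • sortedEigenvectorBasis hM i := by
  rw [sortedEigenvectorBasis_apply, toEuclideanLin_eigenvectorBasis, eigVal_of_isHermitian hM]

lemma toEuclideanLin_herFun_sortedEigenvectorBasis (hM : M.IsHermitian) (f : ℝ → ℝ) (i : Fin n) :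
    toEuclideanLin (herFun f M) (sortedEigenvectorBasis hM i) =
      (f (eigVal M i) : ℂ) • sortedEigenvectorBasis hM i := by
  rw [sortedEigenvectorBasis_apply, toEuclideanLin_herFun_eigenvectorBasis,
    eigVal_of_isHermitian hM]

lemma eigVal_eq_of_eigenbasis (hM : M.IsHermitian)
    {b : OrthonormalBasis (Fin n) ℂ (EuclideanSpace ℂ (Fin n))} {μ : Fin n → ℝ}
    (hμ : Antitone μ) (hb : ∀ i, toEuclideanLin M (b i) = (μ i : ℂ) • b i) : eigVal M = μ :=
  eq_of_antitone_of_eigenbasis (eigVal_antitone hM) hμ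
    (toEuclideanLin_sortedEigenvectorBasis hM) hb

lemma le_eigVal_of_forall_le_re_inner (hM : M.IsHermitian)
    {V : Submodule ℂ (EuclideanSpace ℂ (Fin n))} {m : Fin n} (hV : (m : ℕ) < finrank ℂ V) {c : ℝ}
    (hc : ∀ x ∈ V, ‖x‖ = 1 → c ≤ RCLike.re ⟪x, toEuclideanLin M x⟫_ℂ) : c ≤ eigVal M m :=
  le_of_forall_le_re_inner_apply (eigVal_antitone hM) (toEuclideanLin_sortedEigenvectorBasis hM)
    hV hc

lemma eigVal_herFun_of_monotoneOn (hM : M.IsHermitian) (hpos : ∀ i, 0 < eigVal M i)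
    {f : ℝ → ℝ} (hf : MonotoneOn f (Set.Ioi 0)) :
    eigVal (herFun f M) = fun i => f (eigVal M i) :=
  eigVal_eq_of_eigenbasis (herFun_isHermitian hM f)
    (fun _ _ hij => hf (hpos _) (hpos _) (eigVal_antitone hM hij))
    (toEuclideanLin_herFun_sortedEigenvectorBasis hM f)

lemma eigVal_herFun_of_antitoneOn_s3 (hM : M.IsHermitian) (hpos : ∀ i, 0 < eigVal M i)
    {f : ℝ → ℝ} (hf : AntitoneOn f (Set.Ioi 0)) :
    eigVal (herFun f M) = fun i => f (eigVal M i.rev) :=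
  eigVal_eq_of_eigenbasis (b := (sortedEigenvectorBasis hM).reindex Fin.revPerm)
    (herFun_isHermitian hM f)
    (fun _ _ hij => hf (hpos _) (hpos _) (eigVal_antitone hM (Fin.rev_le_rev.mpr hij)))
    (fun i => by simpa using toEuclideanLin_herFun_sortedEigenvectorBasis hM f i.rev)

end HermitianMatrix

section WeightedPowerSum

open Matrix Real Submodule

variable {n : ℕ}

lemma re_inner_toEuclideanLin_smul_add_smul (P Q : Matrix (Fin n) (Fin n) ℂ) (a b : ℝ)
    (x : EuclideanSpace ℂ (Fin n)) :
    RCLike.re ⟪x, toEuclideanLin (a • P + b • Q) x⟫_ℂ =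
      a * RCLike.re ⟪x, toEuclideanLin P x⟫_ℂ + b * RCLike.re ⟪x, toEuclideanLin Q x⟫_ℂ := by
  simp only [RCLike.real_smul_eq_coe_smul (K := ℂ) a, RCLike.real_smul_eq_coe_smul (K := ℂ) b,
    map_add, map_smul, LinearMap.add_apply, LinearMap.smul_apply, inner_add_right,
    inner_smul_right, RCLike.re_ofReal_mul]

lemma exp_mul_re_inner_mlog_le_re_inner_mpow {M : Matrix (Fin n) (Fin n) ℂ} (hM : M.PosDef) (q : ℝ)
    {x : EuclideanSpace ℂ (Fin n)} (hx : ‖x‖ = 1) :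
    exp (q * RCLike.re ⟪x, toEuclideanLin (mlog M) x⟫_ℂ) ≤
      RCLike.re ⟪x, toEuclideanLin (mpow M q) x⟫_ℂ := by
  set b := hM.1.eigenvectorBasis
  set w : Fin n → ℝ := fun i => ‖⟪b i, x⟫_ℂ‖ ^ 2
  have hw : ∑ i, w i = 1 := by simp [w, b.sum_sq_norm_inner_right, hx]
  rw [mlog, mpow,
    re_inner_apply_eq_sum_of_eigenbasis (toEuclideanLin_herFun_eigenvectorBasis hM.1 log),
    re_inner_apply_eq_sum_of_eigenbasis (toEuclideanLin_herFun_eigenvectorBasis hM.1 (· ^ q))]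
  calc exp (q * ∑ i, log (hM.1.eigenvalues i) * w i)
      = exp (∑ i, w i • (q * log (hM.1.eigenvalues i))) := by
        simp only [Finset.mul_sum, smul_eq_mul]
        congr 1
        exact Finset.sum_congr rfl fun i _ => by ring
    _ ≤ ∑ i, w i • exp (q * log (hM.1.eigenvalues i)) :=
        convexOn_exp.map_sum_le (fun i _ => by positivity) hw (fun i _ => Set.mem_univ _)
    _ = ∑ i, hM.1.eigenvalues i ^ q * w i := by
        refine Finset.sum_congr rfl fun i _ => ?_
        rw [smul_eq_mul, rpow_def_of_pos (hM.eigenvalues_pos i), mul_comm q, mul_comm]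

variable {A B : Matrix (Fin n) (Fin n) ℂ} (hA : A.PosDef) (hB : B.PosDef) {t : ℝ}
  (ht0 : 0 ≤ t) (ht1 : t ≤ 1)

include hA hB ht0 ht1 in
lemma exp_mul_re_inner_le_re_inner_smul_add_smul_mpow (q : ℝ) {x : EuclideanSpace ℂ (Fin n)}
    (hx : ‖x‖ = 1) :
    exp (q * RCLike.re ⟪x, toEuclideanLin ((1 - t) • mlog A + t • mlog B) x⟫_ℂ) ≤
      RCLike.re ⟪x, toEuclideanLin ((1 - t) • mpow A q + t • mpow B q) x⟫_ℂ := by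
  rw [re_inner_toEuclideanLin_smul_add_smul, re_inner_toEuclideanLin_smul_add_smul]
  set a := RCLike.re ⟪x, toEuclideanLin (mlog A) x⟫_ℂ
  set b := RCLike.re ⟪x, toEuclideanLin (mlog B) x⟫_ℂ
  calc exp (q * ((1 - t) * a + t * b))
      = exp ((1 - t) • (q * a) + t • (q * b)) := by simp only [smul_eq_mul]; ring_nf
    _ ≤ (1 - t) • exp (q * a) + t • exp (q * b) :=
        convexOn_exp.2 (Set.mem_univ _) (Set.mem_univ _) (by linarith) ht0 (by ring)
    _ ≤ _ := add_le_add
        (mul_le_mul_of_nonneg_left (exp_mul_re_inner_mlog_le_re_inner_mpow hA q hx) (by linarith))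
        (mul_le_mul_of_nonneg_left (exp_mul_re_inner_mlog_le_re_inner_mpow hB q hx) ht0)

include hA hB ht0 ht1 in
lemma exp_le_eigVal_smul_add_smul_mpow {q c : ℝ} {V : Submodule ℂ (EuclideanSpace ℂ (Fin n))}
    {m : Fin n} (hV : (m : ℕ) < finrank ℂ V)
    (hc : ∀ x ∈ V, ‖x‖ = 1 →
      c ≤ q * RCLike.re ⟪x, toEuclideanLin ((1 - t) • mlog A + t • mlog B) x⟫_ℂ) :
    exp c ≤ eigVal ((1 - t) • mpow A q + t • mpow B q) m :=
  le_eigVal_of_forall_le_re_inner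
    (isHermitian_smul_add_smul (herFun_isHermitian hA.1 _) (herFun_isHermitian hB.1 _) _ _) hV
    fun x hx hx1 => (exp_le_exp.mpr (hc x hx hx1)).trans
      (exp_mul_re_inner_le_re_inner_smul_add_smul_mpow hA hB ht0 ht1 q hx1)

include hA hB ht0 ht1 in
lemma exp_mul_eigVal_le_eigVal_rev_smul_add_smul_mpow_of_neg {q : ℝ} (hq : q < 0) (k : Fin n) :
    exp (q * eigVal ((1 - t) • mlog A + t • mlog B) k) ≤
      eigVal ((1 - t) • mpow A q + t • mpow B q) k.rev := by
  have hL : ((1 - t) • mlog A + t • mlog B).IsHermitian :=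
    isHermitian_smul_add_smul (herFun_isHermitian hA.1 log) (herFun_isHermitian hB.1 log) _ _
  set b := sortedEigenvectorBasis hL
  have hV := sub_card_le_finrank_orthogonal_span_image (𝕜 := ℂ) b (Finset.Iio k)
  rw [Fin.card_Iio, finrank_euclideanSpace_fin] at hV
  refine exp_le_eigVal_smul_add_smul_mpow hA hB ht0 ht1 (V := (span ℂ (b '' Finset.Iio k))ᗮ)
    (by rw [Fin.val_rev]; omega) fun x hx hx1 => mul_le_mul_of_nonpos_left ?_ hq.le
  simpa only [hx1, one_pow, mul_one] using re_inner_apply_le_of_mem_orthogonal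
    (toEuclideanLin_sortedEigenvectorBasis hL)
    (fun i hi => eigVal_antitone hL (not_lt.mp (by simpa using hi))) hx

include hA hB ht0 ht1 in
lemma exp_mul_eigVal_le_eigVal_smul_add_smul_mpow_of_pos {q : ℝ} (hq : 0 < q) (k : Fin n) :
    exp (q * eigVal ((1 - t) • mlog A + t • mlog B) k) ≤
      eigVal ((1 - t) • mpow A q + t • mpow B q) k := by
  have hL : ((1 - t) • mlog A + t • mlog B).IsHermitian :=
    isHermitian_smul_add_smul (herFun_isHermitian hA.1 log) (herFun_isHermitian hB.1 log) _ _
  set b := sortedEigenvectorBasis hL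
  have hV := sub_card_le_finrank_orthogonal_span_image (𝕜 := ℂ) b (Finset.Ioi k)
  rw [Fin.card_Ioi, finrank_euclideanSpace_fin] at hV
  refine exp_le_eigVal_smul_add_smul_mpow hA hB ht0 ht1 (V := (span ℂ (b '' Finset.Ioi k))ᗮ)
    (by omega) fun x hx hx1 => mul_le_mul_of_nonneg_left ?_ hq.le
  simpa only [hx1, one_pow, mul_one] using le_re_inner_apply_of_mem_orthogonal
    (toEuclideanLin_sortedEigenvectorBasis hL)
    (fun i hi => eigVal_antitone hL (not_lt.mp (by simpa using hi))) hx

end WeightedPowerSum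

open Real in
/-- for positive definite `A, B`, `t ∈ [0,1]` and `p < 0 < p'`,
`λ_j(((1-t)Aᵖ + tBᵖ)^{1/p}) ≤ λ_j(((1-t)A^{p'} + tB^{p'})^{1/p'})`. -/
theorem stmt3 {n : ℕ} (A B : Matrix (Fin n) (Fin n) ℂ) (hA : A.PosDef) (hB : B.PosDef)
    (t : ℝ) (ht0 : 0 ≤ t) (ht1 : t ≤ 1)
    (p p' : ℝ) (hp : p < 0) (hp' : 0 < p') (j : Fin n) :
    eigVal (mpow ((1 - t) • mpow A p + t • mpow B p) (1 / p)) j ≤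
      eigVal (mpow ((1 - t) • mpow A p' + t • mpow B p') (1 / p')) j := by
  set μ := eigVal ((1 - t) • mlog A + t • mlog B) j
  have hlow := exp_mul_eigVal_le_eigVal_rev_smul_add_smul_mpow_of_neg hA hB ht0 ht1 hp
  have hhigh := exp_mul_eigVal_le_eigVal_smul_add_smul_mpow_of_pos hA hB ht0 ht1 hp'
  have hherm (q : ℝ) : ((1 - t) • mpow A q + t • mpow B q).IsHermitian :=
    isHermitian_smul_add_smul (herFun_isHermitian hA.1 _) (herFun_isHermitian hB.1 _) _ _
  have hp_inv : 1 / p ≤ 0 := (one_div_neg.mpr hp).le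
  have hp'_inv : 0 ≤ 1 / p' := (one_div_pos.mpr hp').le
  have hlhs : eigVal (mpow ((1 - t) • mpow A p + t • mpow B p) (1 / p)) =
      fun i => eigVal ((1 - t) • mpow A p + t • mpow B p) i.rev ^ (1 / p) :=
    eigVal_herFun_of_antitoneOn_s3 (hherm p)
      (fun i => (exp_pos _).trans_le (by simpa using hlow i.rev))
      (antitoneOn_rpow_Ioi_of_exponent_nonpos hp_inv)
  have hrhs : eigVal (mpow ((1 - t) • mpow A p' + t • mpow B p') (1 / p')) =
      fun i => eigVal ((1 - t) • mpow A p' + t • mpow B p') i ^ (1 / p') :=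
    eigVal_herFun_of_monotoneOn (hherm p') (fun i => (exp_pos _).trans_le (hhigh i))
      ((monotoneOn_rpow_Ici_of_exponent_nonneg hp'_inv).mono Set.Ioi_subset_Ici_self)
  rw [hlhs, hrhs]
  calc _ ≤ exp (p * μ) ^ (1 / p) := rpow_le_rpow_of_nonpos (exp_pos _) (hlow j) hp_inv
    _ = exp μ := by rw [← exp_mul, mul_one_div, mul_div_cancel_left₀ _ hp.ne]
    _ = exp (p' * μ) ^ (1 / p') := by rw [← exp_mul, mul_one_div, mul_div_cancel_left₀ _ hp'.ne']
    _ ≤ _ := rpow_le_rpow (exp_pos _).le (hhigh j) hp'_inv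
end

section
/- Let A and B be n×n complex positive definite matrices. Then tr(A #_{1/2} B) ≤ tr(A^{1/2} B^{1/2}). -/
open scoped BigOperators ComplexOrder

/-!
Write `S = A^{1/2}`, `T = B^{1/2}` and `G = A #_{1/2} B`. The Riccati equation `G A⁻¹ G = B`
says exactly that `V = S⁻¹ G T⁻¹` is unitary, so `G = S V T`. For positive semidefinite `S, T`
and any `V`, the inequality `tr((V - 1)* S (V - 1) T) ≥ 0` gives
`2 Re tr(S V T) ≤ tr(S T) + Re tr(V* S V T)`, i.e. `2 tr G ≤ tr(S T) + Re tr(V* G)`;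
the same inequality for `1, V*, G` in place of `S, V, T` gives `Re tr(V* G) ≤ tr G`.
Hence `tr G ≤ tr(S T)`.
-/

open scoped MatrixOrder

namespace Matrix

variable {ι 𝕜 : Type*} [Fintype ι] [RCLike 𝕜]

theorem PosSemidef.trace_mul_nonneg {M N : Matrix ι ι 𝕜} (hM : M.PosSemidef)
    (hN : N.PosSemidef) : 0 ≤ (M * N).trace := by
  classical
  obtain ⟨P, rfl⟩ := CStarAlgebra.nonneg_iff_eq_star_mul_self.mp hM.nonneg
  rw [star_eq_conjTranspose, Matrix.mul_assoc, trace_mul_comm]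
  simpa only [Matrix.mul_assoc] using (hN.mul_mul_conjTranspose_same P).trace_nonneg

theorem PosSemidef.mul_mul_self_of_isHermitian {B S : Matrix ι ι 𝕜} (hB : B.PosSemidef)
    (hS : S.IsHermitian) : (S * B * S).PosSemidef := by
  simpa only [hS.eq] using hB.conjTranspose_mul_mul_same S

variable [DecidableEq ι]

theorem two_mul_re_trace_mul_mul_le {S T : Matrix ι ι 𝕜} (hS : S.PosSemidef)
    (hT : T.PosSemidef) (V : Matrix ι ι 𝕜) :
    2 * RCLike.re (S * V * T).trace ≤
      RCLike.re (S * T).trace + RCLike.re (Vᴴ * S * V * T).trace := by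
  have h := RCLike.nonneg_iff.mp
    ((hS.conjTranspose_mul_mul_same (V - 1)).trace_mul_nonneg hT) |>.1
  have hadj : (Vᴴ * S * T).trace = star (S * V * T).trace := by
    rw [← trace_conjTranspose]
    simp only [conjTranspose_mul, hS.1.eq, hT.1.eq, Matrix.mul_assoc]
    rw [← Matrix.mul_assoc, trace_mul_comm]
  simp only [conjTranspose_sub, conjTranspose_one, Matrix.sub_mul, Matrix.mul_sub, Matrix.one_mul,
    Matrix.mul_one, trace_sub, map_sub, hadj, RCLike.star_def, RCLike.conj_re] at h
  linarith

theorem trace_le_trace_mul_of_eq_mul_unitary_mul {S T G V : Matrix ι ι 𝕜}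
    (hS : S.PosSemidef) (hT : T.PosSemidef) (hG : G.PosSemidef) (hV : V ∈ unitaryGroup ι 𝕜)
    (hGSVT : G = S * V * T) : G.trace ≤ (S * T).trace := by
  have hVG : RCLike.re (Vᴴ * G).trace ≤ RCLike.re G.trace := by
    have h := two_mul_re_trace_mul_mul_le PosSemidef.one hG Vᴴ
    have hVV : V * Vᴴ = 1 := mem_unitaryGroup_iff.mp hV
    rw [conjTranspose_conjTranspose, Matrix.mul_one, Matrix.one_mul, Matrix.one_mul, hVV,
      Matrix.one_mul] at h
    linarith
  have hGST : 2 * RCLike.re G.trace ≤ RCLike.re (S * T).trace + RCLike.re (Vᴴ * G).trace := by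
    have h := two_mul_re_trace_mul_mul_le hS hT V
    rwa [← hGSVT, Matrix.mul_assoc Vᴴ, Matrix.mul_assoc Vᴴ, ← hGSVT] at h
  rw [RCLike.le_iff_re_im, (RCLike.nonneg_iff.mp hG.trace_nonneg).2,
    (RCLike.nonneg_iff.mp (hS.trace_mul_nonneg hT)).2]
  exact ⟨by linarith, rfl⟩

end Matrix

open Matrix

section MatrixPower

variable {n : ℕ} {A B : Matrix (Fin n) (Fin n) ℂ}

theorem herFun_eq_cfc_s13 (hA : A.IsHermitian) (f : ℝ → ℝ) : herFun f A = cfc f A := by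
  rw [herFun, dif_pos hA, hA.cfc_eq]
  rfl

theorem mpow_eq_cfc (hA : A.IsHermitian) (r : ℝ) : mpow A r = cfc (fun x : ℝ => x ^ r) A :=
  herFun_eq_cfc_s13 hA _

theorem isHermitian_mpow (hA : A.IsHermitian) (r : ℝ) : (mpow A r).IsHermitian := by
  rw [mpow_eq_cfc hA]
  exact cfc_predicate _ A

theorem posSemidef_mpow (hA : A.PosSemidef) (r : ℝ) : (mpow A r).PosSemidef := by
  rw [mpow_eq_cfc hA.1]
  exact (cfc_nonneg fun x hx =>
    Real.rpow_nonneg (spectrum_nonneg_of_nonneg hA.nonneg hx) r).posSemidef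

theorem mpow_half_mul_self (hA : A.PosSemidef) : mpow A (1 / 2) * mpow A (1 / 2) = A := by
  rw [mpow_eq_cfc hA.1, ← cfc_mul _ _ _ (A.finite_real_spectrum.continuousOn _)
    (A.finite_real_spectrum.continuousOn _)]
  conv_rhs => rw [← cfc_id' ℝ A]
  refine cfc_congr fun x hx => ?_
  rw [← Real.sqrt_eq_rpow, Real.mul_self_sqrt (spectrum_nonneg_of_nonneg hA.nonneg hx)]

theorem mpow_mul_mpow_neg (hA : A.PosDef) (r : ℝ) : mpow A r * mpow A (-r) = 1 := by
  rw [mpow_eq_cfc hA.1, mpow_eq_cfc hA.1, ← cfc_mul _ _ _ (A.finite_real_spectrum.continuousOn _)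
    (A.finite_real_spectrum.continuousOn _), ← cfc_const_one ℝ A]
  refine cfc_congr fun x hx => ?_
  rw [← Real.rpow_add (hA.isStrictlyPositive.spectrum_pos hx), add_neg_cancel, Real.rpow_zero]

theorem posSemidef_gm (hA : A.IsHermitian) (hB : B.PosSemidef) (t : ℝ) :
    (gm A B t).PosSemidef :=
  (posSemidef_mpow (hB.mul_mul_self_of_isHermitian (isHermitian_mpow hA _)) t)
    |>.mul_mul_self_of_isHermitian (isHermitian_mpow hA _)

theorem gm_half_mul_mul_gm_half (hA : A.PosDef) (hB : B.PosSemidef) :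
    gm A B (1 / 2) * (mpow A (-(1 / 2)) * mpow A (-(1 / 2))) * gm A B (1 / 2) = B := by
  set S := mpow A (1 / 2)
  set Si := mpow A (-(1 / 2))
  set R := mpow (Si * B * Si) (1 / 2)
  have hSSi : S * Si = 1 := mpow_mul_mpow_neg hA _
  have hSiS : Si * S = 1 := by simpa only [neg_neg] using mpow_mul_mpow_neg hA (-(1 / 2))
  have hRR : R * R = Si * B * Si :=
    mpow_half_mul_self (hB.mul_mul_self_of_isHermitian (isHermitian_mpow hA.1 _))
  calc S * R * S * (Si * Si) * (S * R * S) = S * R * (S * Si) * (Si * S) * R * S := by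
        simp only [Matrix.mul_assoc]
    _ = S * (R * R) * S := by
        rw [hSSi, hSiS, Matrix.mul_one, Matrix.mul_one, Matrix.mul_assoc S R R]
    _ = S * Si * B * (Si * S) := by
        rw [hRR]
        simp only [Matrix.mul_assoc]
    _ = B := by rw [hSSi, hSiS, Matrix.one_mul, Matrix.mul_one]

theorem exists_mem_unitaryGroup_gm_half_eq (hA : A.PosDef) (hB : B.PosDef) :
    ∃ V ∈ unitaryGroup (Fin n) ℂ, gm A B (1 / 2) = mpow A (1 / 2) * V * mpow B (1 / 2) := by
  set G := gm A B (1 / 2)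
  set Si := mpow A (-(1 / 2))
  set T := mpow B (1 / 2)
  set Ti := mpow B (-(1 / 2))
  have hTTi : T * Ti = 1 := mpow_mul_mpow_neg hB _
  have hTiT : Ti * T = 1 := by simpa only [neg_neg] using mpow_mul_mpow_neg hB (-(1 / 2))
  have hTT : T * T = B := mpow_half_mul_self hB.posSemidef
  refine ⟨Si * G * Ti, ?_, ?_⟩
  · rw [mem_unitaryGroup_iff', star_eq_conjTranspose, conjTranspose_mul, conjTranspose_mul,
      (isHermitian_mpow hA.1 _).eq, (isHermitian_mpow hB.1 _).eq,
      (posSemidef_gm hA.1 hB.posSemidef _).1.eq]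
    calc Ti * (G * Si) * (Si * G * Ti) = Ti * (G * (Si * Si) * G) * Ti := by
          simp only [Matrix.mul_assoc]
      _ = Ti * T * (T * Ti) := by
          rw [gm_half_mul_mul_gm_half hA hB.posSemidef, ← hTT]
          simp only [Matrix.mul_assoc]
      _ = 1 := by rw [hTiT, hTTi, Matrix.one_mul]
  · calc G = mpow A (1 / 2) * Si * G * (Ti * T) := by
          rw [mpow_mul_mpow_neg hA, hTiT, Matrix.one_mul, Matrix.mul_one]
      _ = _ := by simp only [Matrix.mul_assoc]

end MatrixPower

/-- for positive definite `A, B`, `tr(A #_{1/2} B) ≤ tr(A^{1/2} B^{1/2})`. -/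
theorem stmt13 {n : ℕ} (A B : Matrix (Fin n) (Fin n) ℂ) (hA : A.PosDef) (hB : B.PosDef) :
    (gm A B (1 / 2)).trace ≤ (mpow A (1 / 2) * mpow B (1 / 2)).trace := by
  obtain ⟨V, hV, hG⟩ := exists_mem_unitaryGroup_gm_half_eq hA hB
  exact trace_le_trace_mul_of_eq_mul_unitary_mul (posSemidef_mpow hA.posSemidef _)
    (posSemidef_mpow hB.posSemidef _) (posSemidef_gm hA.1 hB.posSemidef _) hV hG
end
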